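/- arXiv:2309.13405 — 2 statements merged into one kernel-verified Lean document; each statement's English description precedes it below -/
import Mathlib

section
/- Let i and j be vertices in different bridge-blocks (ψ(i) ≠ ψ(j)) that are connected in G, with bridge path u_0 = i, (u_1,u_2),…,(u_{2T−1},u_{2T}), u_{2T+1} = j. Then the matrix R satisfies R_ij · S_{u_t,u_t} = R_{i,u_t} · R_{u_t,j} for every t = 0, 1, …, 2T+1. -/
attribute [local instance] Classical.propDecidable

noncomputable section

open Matrix

/-- The MTP2 constraint set `M^n`: real symmetric positive definite matrices with
nonpositive off-diagonal entries. -/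
def MSet {n : Type*} [Fintype n] [DecidableEq n] (Θ : Matrix n n ℝ) : Prop :=
  Θ.IsSymm ∧ Θ.PosDef ∧ ∀ i j, i ≠ j → Θ i j ≤ 0

/-- The objective `f(Θ) = -log det Θ + tr(Θ S) + ∑_{i ≠ j} Λ_ij |Θ_ij|`. -/
def objf {n : Type*} [Fintype n] [DecidableEq n] (S Λ Θ : Matrix n n ℝ) : ℝ :=
  -Real.log Θ.det + (Θ * S).trace + ∑ i, ∑ j, if i = j then 0 else Λ i j * |Θ i j|

/-- The thresholded sample covariance matrix `T` (MTP₂ version). -/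
def thresh {p : ℕ} (S Λ : Matrix (Fin p) (Fin p) ℝ) : Matrix (Fin p) (Fin p) ℝ :=
  Matrix.of fun i j => if i ≠ j ∧ Λ i j < S i j then S i j - Λ i j else 0

/-- The thresholded matrix `T` for the traditional graphical lasso. -/
def threshGL {p : ℕ} (S Λ : Matrix (Fin p) (Fin p) ℝ) : Matrix (Fin p) (Fin p) ℝ :=
  Matrix.of fun i j =>
    if i = j ∨ |S i j| ≤ Λ i j then 0 else S i j - Λ i j * Real.sign (S i j)

/-- The support graph of a (symmetric) matrix: `i ~ j` iff `i ≠ j` and `A i j ≠ 0`. -/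
def suppG {p : ℕ} (A : Matrix (Fin p) (Fin p) ℝ) : SimpleGraph (Fin p) :=
  SimpleGraph.fromRel fun i j => A i j ≠ 0

/-- The graph obtained from `G` by deleting all bridges. -/
def bridgeDeleted {V : Type*} (G : SimpleGraph V) : SimpleGraph V :=
  G.deleteEdges {e | G.IsBridge e}

/-- `V` is a bridge-block of `G`: a connected component of the bridge-deleted graph. -/
def IsBlock {p : ℕ} (G : SimpleGraph (Fin p)) (V : Finset (Fin p)) : Prop :=
  ∃ i, ∀ j, j ∈ V ↔ (bridgeDeleted G).Reachable i j

/-- `ζ_i` defined from `S` and a thresholded matrix `T`. -/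
def zetaT {p : ℕ} (S T : Matrix (Fin p) (Fin p) ℝ) (i : Fin p) : ℝ :=
  (1 / S i i) *
    ∑ m, if (suppG T).IsBridge s(i, m)
      then T i m ^ 2 / (S i i * S m m - T i m ^ 2) else 0

/-- `ζ_i` for the MTP₂ problem. -/
def zeta {p : ℕ} (S Λ : Matrix (Fin p) (Fin p) ℝ) (i : Fin p) : ℝ :=
  zetaT S (thresh S Λ) i

/-- Principal submatrix of `A` on the index set `V`. -/
def subMat {p : ℕ} (A : Matrix (Fin p) (Fin p) ℝ) (V : Finset (Fin p)) :
    Matrix ↥V ↥V ℝ :=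
  A.submatrix (fun a => (a : Fin p)) fun a => (a : Fin p)

/-- `Θk` is the minimizer of the `k`-th MTP₂ subproblem on the bridge-block `V`. -/
def IsSubMinimizer {p : ℕ} (S Λ : Matrix (Fin p) (Fin p) ℝ) (V : Finset (Fin p))
    (Θk : Matrix ↥V ↥V ℝ) : Prop :=
  MSet Θk ∧ ∀ Θ' : Matrix ↥V ↥V ℝ, MSet Θ' →
    -Real.log Θk.det + (Θk * subMat (S - Λ) V).trace ≤
      -Real.log Θ'.det + (Θ' * subMat (S - Λ) V).trace

/-- `Θk` is the minimizer of the `k`-th graphical lasso subproblem on the block `V`. -/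
def IsGLSubMinimizer {p : ℕ} (S Λ : Matrix (Fin p) (Fin p) ℝ) (V : Finset (Fin p))
    (Θk : Matrix ↥V ↥V ℝ) : Prop :=
  Θk.IsSymm ∧ Θk.PosDef ∧ ∀ Θ' : Matrix ↥V ↥V ℝ, Θ'.IsSymm → Θ'.PosDef →
    objf (subMat S V) (subMat Λ V) Θk ≤ objf (subMat S V) (subMat Λ V) Θ'

/-- The product `∏_t R_{u_t,u_{t+1}} / √(S_{u_t,u_t} S_{u_{t+1},u_{t+1}})` over the
consecutive pairs of the list `l = [u_0, …, u_{2T+1}]`. -/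
def chainProd {p : ℕ} (S R : Matrix (Fin p) (Fin p) ℝ) (l : List (Fin p)) : ℝ :=
  ((l.zip l.tail).map fun q => R q.1 q.2 / Real.sqrt (S q.1 q.1 * S q.2 q.2)).prod

/-- The node sequence `u_0 = i, u_1, u_2, …, u_{2T-1}, u_{2T}, u_{2T+1} = j`, where
`(u_1,u_2), …, (u_{2T-1},u_{2T})` are the bridges traversed by the walk `W`, in order of
traversal and oriented in the direction of traversal. -/
def bridgeSeq {p : ℕ} (G : SimpleGraph (Fin p)) {i j : Fin p} (W : G.Walk i j) :
    List (Fin p) :=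
  i :: (((W.darts.filter fun d => decide (G.IsBridge d.edge)).flatMap
      fun d => [d.toProd.1, d.toProd.2]) ++ [j])



namespace StmtAux
open SimpleGraph Walk

variable {V : Type*} {G : SimpleGraph V}

lemma fst_ne_end {a x : V} {Q : G.Walk a x} (hQ : Q.IsPath) {d : G.Dart}
    (hd : d ∈ Q.darts) : d.fst ≠ x := by
  intro hx
  have hmem : d.fst ∈ Q.support.dropLast := by
    rw [← Q.map_fst_darts]; exact List.mem_map_of_mem hd
  have hglast := Q.getLast_support
  have hnd := hQ.support_nodup
  have hsplit := List.dropLast_append_getLast (l := Q.support) (Q.support_ne_nil)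
  rw [← hsplit] at hnd
  have := (List.nodup_append'.mp hnd).2.2
  exact this hmem (by simp [hglast, hx])

lemma snd_ne_start {x b : V} {Q : G.Walk x b} (hQ : Q.IsPath) {d : G.Dart}
    (hd : d ∈ Q.darts) : d.snd ≠ x := by
  intro hx
  have hmem : d.snd ∈ Q.support.tail := by
    rw [← Q.map_snd_darts]; exact List.mem_map_of_mem hd
  have hnd := hQ.support_nodup
  rw [Q.support_eq_cons] at hnd
  exact (List.nodup_cons.mp hnd).1 (hx ▸ hmem)

lemma symm_not_mem {a b : V} {W : G.Walk a b} (hW : W.IsPath) {d : G.Dart}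
    (hd : d ∈ W.darts) : d.symm ∉ W.darts := by
  intro h
  have hnd : (W.darts.map Dart.edge).Nodup := hW.isTrail.edges_nodup
  have := List.inj_on_of_nodup_map hnd h hd (d.edge_symm)
  exact d.symm_ne this

lemma darts_take_drop [DecidableEq V] {i j u : V} (W : G.Walk i j) (hsup : u ∈ W.support) :
    W.darts = (W.takeUntil u hsup).darts ++ (W.dropUntil u hsup).darts := by
  conv_lhs => rw [← W.take_spec hsup]
  rw [darts_append]

lemma getLast_eq_dart [DecidableEq V] {i j : V} {W : G.Walk i j} (hW : W.IsPath) {d : G.Dart}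
    (hd : d ∈ W.darts) (hsup : d.snd ∈ W.support) :
    ∃ hne : (W.takeUntil d.snd hsup).darts ≠ [],
      (W.takeUntil d.snd hsup).darts.getLast hne = d := by
  have hsplit := darts_take_drop W hsup
  have hd1 : d ∈ (W.takeUntil d.snd hsup).darts := by
    rcases List.mem_append.mp (hsplit ▸ hd) with h | h
    · exact h
    · exact absurd rfl (snd_ne_start (hW.dropUntil hsup) h)
  have hne : (W.takeUntil d.snd hsup).darts ≠ [] := List.ne_nil_of_mem hd1
  refine ⟨hne, ?_⟩
  have hnd : ((W.takeUntil d.snd hsup).darts.map (·.snd)).Nodup := by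
    rw [map_snd_darts]
    exact (hW.takeUntil hsup).support_nodup.tail
  exact List.inj_on_of_nodup_map hnd (List.getLast_mem hne) hd1
    (by rw [getLast_darts_eq_lastDart]; rfl)

lemma head_eq_dart [DecidableEq V] {i j : V} {W : G.Walk i j} (hW : W.IsPath) {d : G.Dart}
    (hd : d ∈ W.darts) (hsup : d.fst ∈ W.support) :
    ∃ hne : (W.dropUntil d.fst hsup).darts ≠ [],
      (W.dropUntil d.fst hsup).darts.head hne = d := by
  have hsplit := darts_take_drop W hsup
  have hd1 : d ∈ (W.dropUntil d.fst hsup).darts := by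
    rcases List.mem_append.mp (hsplit ▸ hd) with h | h
    · exact absurd rfl (fst_ne_end (hW.takeUntil hsup) h)
    · exact h
  have hne : (W.dropUntil d.fst hsup).darts ≠ [] := List.ne_nil_of_mem hd1
  refine ⟨hne, ?_⟩
  have hnd : ((W.dropUntil d.fst hsup).darts.map (·.fst)).Nodup := by
    rw [map_fst_darts]
    exact (List.dropLast_sublist _).nodup (hW.dropUntil hsup).support_nodup
  exact List.inj_on_of_nodup_map hnd (List.head_mem hne) hd1
    (by rw [head_darts_eq_firstDart]; rfl)

lemma edge_not_mem_takeUntil [DecidableEq V] {a b : V} {W : G.Walk a b} (hW : W.IsPath) {d : G.Dart}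
    (hd : d ∈ W.darts) (hsup : d.fst ∈ W.support) :
    d.edge ∉ (W.takeUntil d.fst hsup).edges := by
  intro h
  obtain ⟨d', hd', he⟩ := List.mem_map.mp h
  rcases (dart_edge_eq_iff d' d).mp he with rfl | rfl
  · exact fst_ne_end (hW.takeUntil hsup) hd' rfl
  · have : d.symm ∈ W.darts := by
      rw [darts_take_drop W hsup]
      exact List.mem_append_left _ hd'
    exact symm_not_mem hW hd this

lemma edge_not_mem_dropUntil [DecidableEq V] {a b : V} {W : G.Walk a b} (hW : W.IsPath) {d : G.Dart}
    (hd : d ∈ W.darts) (hsup : d.snd ∈ W.support) :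
    d.edge ∉ (W.dropUntil d.snd hsup).edges := by
  intro h
  obtain ⟨d', hd', he⟩ := List.mem_map.mp h
  rcases (dart_edge_eq_iff d' d).mp he with rfl | rfl
  · exact snd_ne_start (hW.dropUntil hsup) hd' rfl
  · have : d.symm ∈ W.darts := by
      rw [darts_take_drop W hsup]
      exact List.mem_append_right _ hd'
    exact symm_not_mem hW hd this

lemma not_reachable_bridgeDeleted [DecidableEq V] {a b : V} {W : G.Walk a b} (hW : W.IsPath)
    {d : G.Dart} (hd : d ∈ W.darts) (hbr : G.IsBridge d.edge) :
    ¬ (bridgeDeleted G).Reachable a b := by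
  rintro ⟨Q⟩
  have hfst : d.fst ∈ W.support := W.dart_fst_mem_support_of_mem_darts hd
  have hsnd : d.snd ∈ W.support := W.dart_snd_mem_support_of_mem_darts hd
  have hbr' : ¬ (G.deleteEdges {s(d.fst, d.snd)}).Reachable d.fst d.snd :=
    (isBridge_iff.mp hbr)
  apply hbr'
  rw [reachable_delete_edges_iff_exists_walk]
  have hle : bridgeDeleted G ≤ G := deleteEdges_le _
  refine ⟨((W.takeUntil d.fst hfst).reverse).append
    ((Q.map (Hom.ofLE hle)).append (W.dropUntil d.snd hsnd).reverse), ?_⟩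
  have hedge : (s(d.fst, d.snd) : Sym2 V) = d.edge := rfl
  rw [edges_append, edges_append, List.mem_append, List.mem_append]
  push_neg
  refine ⟨?_, ?_, ?_⟩
  · rw [edges_reverse, List.mem_reverse, hedge]
    exact edge_not_mem_takeUntil hW hd hfst
  · rw [edges_map, hedge]
    rintro hmem
    simp only [List.mem_map] at hmem
    obtain ⟨e, he, hee⟩ := hmem
    have hee' : e = d.edge := by
      simpa [Hom.ofLE_apply, Sym2.map_id'] using hee
    subst hee'
    have := Q.edges_subset_edgeSet he
    rw [bridgeDeleted, edgeSet_deleteEdges] at this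
    exact this.2 hbr
  · rw [edges_reverse, List.mem_reverse, hedge]
    exact edge_not_mem_dropUntil hW hd hsnd

end StmtAux

section CPAux
variable {p : ℕ} (S R : Matrix (Fin p) (Fin p) ℝ)

lemma chainProd_single (a : Fin p) : chainProd S R [a] = 1 := by simp [chainProd]

lemma chainProd_pair (a b : Fin p) :
    chainProd S R [a, b] = R a b / Real.sqrt (S a a * S b b) := by simp [chainProd]

lemma chainProd_cons_cons (a b : Fin p) (l : List (Fin p)) :
    chainProd S R (a :: b :: l) =
      (R a b / Real.sqrt (S a a * S b b)) * chainProd S R (b :: l) := by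
  simp [chainProd]

lemma chainProd_split (u : Fin p) (l2 : List (Fin p)) :
    ∀ l1, chainProd S R (l1 ++ u :: l2) =
      chainProd S R (l1 ++ [u]) * chainProd S R (u :: l2)
  | [] => by simp [chainProd_single]
  | [a] => by
      simp only [List.cons_append, List.nil_append]
      rw [chainProd_cons_cons, chainProd_pair]
  | a :: b :: l1 => by
      simp only [List.cons_append]
      rw [chainProd_cons_cons, chainProd_cons_cons, ← List.cons_append,
        ← List.cons_append, chainProd_split u l2 (b :: l1), mul_assoc]

end CPAux

/-- Corollary 3: decomposition of `R_ij` along the bridge path. -/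
theorem stmt_2 {p : ℕ} (hp : 1 ≤ p)
    (S Λ : Matrix (Fin p) (Fin p) ℝ)
    (hSsymm : S.IsSymm) (hΛsymm : Λ.IsSymm)
    (hSdiag : ∀ i, 0 < S i i) (hΛnn : ∀ i j, 0 ≤ Λ i j) (hΛdiag : ∀ i, Λ i i = 0)
    (hA1 : ∀ i j, i ≠ j → S i j < Real.sqrt (S i i * S j j))
    -- the family of block matrices `Θ̂_k`, indexed by the bridge-blocks
    (Θhat : ∀ V : Finset (Fin p), Matrix ↥V ↥V ℝ)
    (hΘhatPD : ∀ V, IsBlock (suppG (thresh S Λ)) V → (Θhat V).IsSymm ∧ (Θhat V).PosDef)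
    (hRhatDiag : ∀ V, IsBlock (suppG (thresh S Λ)) V → ∀ i, ∀ hi : i ∈ V,
      (Θhat V)⁻¹ ⟨i, hi⟩ ⟨i, hi⟩ = S i i)
    -- the matrix `R`
    (R : Matrix (Fin p) (Fin p) ℝ) (hRsymm : R.IsSymm)
    (hRblock : ∀ V, IsBlock (suppG (thresh S Λ)) V → ∀ i, ∀ hi : i ∈ V, ∀ j, ∀ hj : j ∈ V,
      R i j = (Θhat V)⁻¹ ⟨i, hi⟩ ⟨j, hj⟩)
    (hRbridge : ∀ i j, (suppG (thresh S Λ)).IsBridge s(i, j) → R i j = thresh S Λ i j)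
    (hRdisc : ∀ i j, ¬(suppG (thresh S Λ)).Reachable i j → R i j = 0)
    (hRpath : ∀ i j, ¬(bridgeDeleted (suppG (thresh S Λ))).Reachable i j →
      ¬(suppG (thresh S Λ)).IsBridge s(i, j) →
      ∀ W : (suppG (thresh S Λ)).Walk i j, W.IsPath →
        R i j = Real.sqrt (S i i * S j j) * chainProd S R (bridgeSeq (suppG (thresh S Λ)) W))
    (i j : Fin p) (hij : ¬(bridgeDeleted (suppG (thresh S Λ))).Reachable i j)
    (W : (suppG (thresh S Λ)).Walk i j) (hW : W.IsPath) :
    ∀ u ∈ bridgeSeq (suppG (thresh S Λ)) W, R i j * S u u = R i u * R u j := by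
    classical
  -- `R` has the diagonal of `S`
  have hRdiag : ∀ a : Fin p, R a a = S a a := by
    intro a
    have hfin : {x | (bridgeDeleted (suppG (thresh S Λ))).Reachable a x}.Finite := Set.toFinite _
    have hmem : ∀ x, x ∈ hfin.toFinset ↔ (bridgeDeleted (suppG (thresh S Λ))).Reachable a x := by
      intro x; rw [Set.Finite.mem_toFinset]; rfl
    have hblk : IsBlock (suppG (thresh S Λ)) hfin.toFinset := ⟨a, fun x => hmem x⟩
    have ha : a ∈ hfin.toFinset := (hmem a).mpr (SimpleGraph.Reachable.refl a)
    rw [hRblock hfin.toFinset hblk a ha a ha, hRhatDiag hfin.toFinset hblk a ha]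
  have hsqpos : ∀ a b : Fin p, (0:ℝ) < Real.sqrt (S a a * S b b) := fun a b =>
    Real.sqrt_pos.mpr (mul_pos (hSdiag a) (hSdiag b))
  have hone : ∀ a : Fin p, R a a / Real.sqrt (S a a * S a a) = 1 := by
    intro a
    rw [hRdiag a, Real.sqrt_mul_self (hSdiag a).le, div_self (hSdiag a).ne']
  have halg : ∀ u : Fin p, ∀ X Y : ℝ,
      Real.sqrt (S i i * S j j) * (X * Y) * S u u
        = (Real.sqrt (S i i * S u u) * X) * (Real.sqrt (S u u * S j j) * Y) := by
    intro u X Y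
    rw [Real.sqrt_mul (hSdiag i).le, Real.sqrt_mul (hSdiag i).le,
      Real.sqrt_mul (hSdiag u).le]
    have h2 : Real.sqrt (S u u) ^ 2 = S u u :=
      Real.sq_sqrt (hSdiag u).le
    linear_combination (Real.sqrt (S i i) * Real.sqrt (S j j) * X * Y) * h2.symm
  -- the key formula, valid for every path between any two vertices
  have key : ∀ (a b : Fin p) (P : (suppG (thresh S Λ)).Walk a b), P.IsPath →
      R a b = Real.sqrt (S a a * S b b) * chainProd S R (bridgeSeq (suppG (thresh S Λ)) P) := by
    intro a b P hP
    by_cases hfil : P.darts.filter (fun d => decide ((suppG (thresh S Λ)).IsBridge d.edge)) = []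
    · rw [bridgeSeq, hfil]
      simp only [List.flatMap_nil, List.nil_append]
      rw [chainProd_pair, mul_comm, div_mul_cancel₀ _ (hsqpos a b).ne']
    · obtain ⟨d, hdmem⟩ := List.exists_mem_of_ne_nil _ hfil
      have hdW : d ∈ P.darts := (List.mem_filter.mp hdmem).1
      have hdbr : (suppG (thresh S Λ)).IsBridge d.edge := of_decide_eq_true (List.mem_filter.mp hdmem).2
      have hnr : ¬ (bridgeDeleted (suppG (thresh S Λ))).Reachable a b :=
        StmtAux.not_reachable_bridgeDeleted hP hdW hdbr
      by_cases hbr : (suppG (thresh S Λ)).IsBridge s(a, b)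
      · obtain ⟨hadj, hall⟩ : (suppG (thresh S Λ)).Adj a b ∧ _ :=
          ⟨hbr.reachable_iff_adj.mp P.reachable, SimpleGraph.isBridge_iff_forall_walk_mem_edges.mp hbr⟩
        cases P with
        | nil => exact absurd rfl hadj.ne
        | @cons _ c _ h Q =>
          obtain ⟨hQ, hanot⟩ := (SimpleGraph.Walk.cons_isPath_iff h Q).mp hP
          have hedge := hall (SimpleGraph.Walk.cons h Q)
          rw [SimpleGraph.Walk.edges_cons, List.mem_cons] at hedge
          rcases hedge with hedge | hedge
          · have hcb : b = c := Sym2.congr_right.mp hedge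
            subst hcb
            have hQnil : Q = SimpleGraph.Walk.nil := SimpleGraph.Walk.isPath_iff_eq_nil.mp hQ
            subst hQnil
            have hseq : bridgeSeq (suppG (thresh S Λ)) (SimpleGraph.Walk.cons h SimpleGraph.Walk.nil) = [a, a, b, b] := by
              rw [bridgeSeq]
              simp [SimpleGraph.Walk.darts_cons, SimpleGraph.Walk.darts_nil, decide_eq_true hbr, List.filter_cons, SimpleGraph.Dart.edge, hbr]
            rw [hseq, chainProd_cons_cons, chainProd_cons_cons, chainProd_pair,
              hone a, hone b, one_mul, mul_one, mul_comm,
              div_mul_cancel₀ _ (hsqpos a b).ne']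
          · exact absurd (SimpleGraph.Walk.fst_mem_support_of_mem_edges Q hedge) hanot
      · exact hRpath a b hnr hbr P hP
  -- now the main statement
  intro u hu
  rw [bridgeSeq, List.mem_cons] at hu
  rcases hu with rfl | hu
  · rw [hRdiag u]; ring
  rw [List.mem_append] at hu
  rcases hu with hu | hu
  swap
  · rw [List.mem_singleton] at hu; subst hu
    rw [hRdiag u]
  obtain ⟨d, hdf, hud⟩ := List.mem_flatMap.mp hu
  have hdW : d ∈ W.darts := (List.mem_filter.mp hdf).1
  have hdbr : (suppG (thresh S Λ)).IsBridge d.edge := of_decide_eq_true (List.mem_filter.mp hdf).2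
  have hfst : d.fst ∈ W.support := W.dart_fst_mem_support_of_mem_darts hdW
  have hsnd : d.snd ∈ W.support := W.dart_snd_mem_support_of_mem_darts hdW
  have hu2 : u = d.fst ∨ u = d.snd := by simpa using hud
  rcases hu2 with rfl | rfl
  · -- u = d.fst
    obtain ⟨hne, hhead⟩ := StmtAux.head_eq_dart hW hdW hfst
    have hW1 := hW.takeUntil hfst
    have hW2 := hW.dropUntil hfst
    have hdarts := StmtAux.darts_take_drop W hfst
    obtain ⟨T, hd2⟩ : ∃ T, (W.dropUntil d.fst hfst).darts = d :: T := by
      refine ⟨(W.dropUntil d.fst hfst).darts.tail, ?_⟩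
      have hd2' := (List.cons_head_tail hne).symm
      rw [hhead] at hd2'
      exact hd2'
    have hsplit : ∃ L1 L2 : List (Fin p),
        bridgeSeq (suppG (thresh S Λ)) W = (i :: L1) ++ d.fst :: (L2 ++ [j])
        ∧ chainProd S R (bridgeSeq (suppG (thresh S Λ)) (W.takeUntil d.fst hfst))
            = chainProd S R ((i :: L1) ++ [d.fst])
        ∧ chainProd S R (bridgeSeq (suppG (thresh S Λ)) (W.dropUntil d.fst hfst))
            = chainProd S R (d.fst :: (L2 ++ [j])) := by
      refine ⟨((W.takeUntil d.fst hfst).darts.filter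
            (fun d => decide ((suppG (thresh S Λ)).IsBridge d.edge))).flatMap
            (fun d => [d.toProd.1, d.toProd.2]),
          d.snd :: (T.filter
            (fun d => decide ((suppG (thresh S Λ)).IsBridge d.edge))).flatMap
            (fun d => [d.toProd.1, d.toProd.2]), ?_, ?_, ?_⟩
      · rw [bridgeSeq, hdarts, hd2]
        simp [List.filter_append, List.filter_cons, decide_eq_true hdbr]
      · rw [bridgeSeq]
        simp
      · have hLHS : bridgeSeq (suppG (thresh S Λ)) (W.dropUntil d.fst hfst)
            = [d.fst] ++ d.fst :: ((d.snd :: (T.filter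
                (fun d => decide ((suppG (thresh S Λ)).IsBridge d.edge))).flatMap
                (fun d => [d.toProd.1, d.toProd.2])) ++ [j]) := by
          rw [bridgeSeq, hd2]
          simp [List.filter_cons, decide_eq_true hdbr]
        rw [hLHS, chainProd_split,
          show ([d.fst] ++ [d.fst] : List (Fin p)) = [d.fst, d.fst] from rfl,
          chainProd_pair, hone, one_mul]
    obtain ⟨L1, L2, hW0, h1, h2⟩ := hsplit
    have e0 := key i j W hW
    have e1 := key i d.fst _ hW1
    have e2 := key d.fst j _ hW2
    rw [hW0, chainProd_split] at e0
    rw [h1] at e1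
    rw [h2] at e2
    rw [e0, e1, e2]
    exact halg d.fst _ _
  · -- u = d.snd
    obtain ⟨hne, hlast⟩ := StmtAux.getLast_eq_dart hW hdW hsnd
    have hW1 := hW.takeUntil hsnd
    have hW2 := hW.dropUntil hsnd
    have hdarts := StmtAux.darts_take_drop W hsnd
    obtain ⟨D, hd1⟩ : ∃ D, (W.takeUntil d.snd hsnd).darts = D ++ [d] := by
      refine ⟨(W.takeUntil d.snd hsnd).darts.dropLast, ?_⟩
      have hd1' := (List.dropLast_append_getLast hne).symm
      rw [hlast] at hd1'
      exact hd1'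
    have hsplit : ∃ L1 L2 : List (Fin p),
        bridgeSeq (suppG (thresh S Λ)) W = (i :: L1) ++ d.snd :: (L2 ++ [j])
        ∧ chainProd S R (bridgeSeq (suppG (thresh S Λ)) (W.takeUntil d.snd hsnd))
            = chainProd S R ((i :: L1) ++ [d.snd])
        ∧ chainProd S R (bridgeSeq (suppG (thresh S Λ)) (W.dropUntil d.snd hsnd))
            = chainProd S R (d.snd :: (L2 ++ [j])) := by
      refine ⟨(D.filter
            (fun d => decide ((suppG (thresh S Λ)).IsBridge d.edge))).flatMap
            (fun d => [d.toProd.1, d.toProd.2]) ++ [d.fst],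
          ((W.dropUntil d.snd hsnd).darts.filter
            (fun d => decide ((suppG (thresh S Λ)).IsBridge d.edge))).flatMap
            (fun d => [d.toProd.1, d.toProd.2]), ?_, ?_, ?_⟩
      · rw [bridgeSeq, hdarts, hd1]
        simp [List.filter_append, List.filter_cons, decide_eq_true hdbr]
      · have hLHS : bridgeSeq (suppG (thresh S Λ)) (W.takeUntil d.snd hsnd)
            = (i :: ((D.filter
                (fun d => decide ((suppG (thresh S Λ)).IsBridge d.edge))).flatMap
                (fun d => [d.toProd.1, d.toProd.2]) ++ [d.fst])) ++ d.snd :: [d.snd] := by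
          rw [bridgeSeq, hd1]
          simp [List.filter_append, List.filter_cons, decide_eq_true hdbr]
        rw [hLHS, chainProd_split,
          show (d.snd :: [d.snd] : List (Fin p)) = [d.snd, d.snd] from rfl,
          chainProd_pair, hone, mul_one]
      · rw [bridgeSeq]
    obtain ⟨L1, L2, hW0, h1, h2⟩ := hsplit
    have e0 := key i j W hW
    have e1 := key i d.snd _ hW1
    have e2 := key d.snd j _ hW2
    rw [hW0, chainProd_split] at e0
    rw [h1] at e1
    rw [h2] at e2
    rw [e0, e1, e2]
    exact halg d.snd _ _
end
end

section
/- Let Θ ∈ M^p be such that its inverse R = Θ^{-1} satisfies: R_ii = S_ii for all i; R_ij = S_ij − Λ_ij for every pair i ≠ j with Θ_ij ≠ 0; and R_ij ≥ S_ij − Λ_ij for every pair i ≠ j with Θ_ij = 0. Then Θ minimizes f over M^p, i.e., f(Θ) ≤ f(Θ') for every Θ' ∈ M^p. -/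
attribute [local instance] Classical.propDecidable

noncomputable section

open Matrix

lemma my_trace_eq_sum_eigenvalues {n : Type*} [Fintype n] [DecidableEq n]
    {A : Matrix n n ℝ} (hA : A.IsHermitian) :
    A.trace = ∑ i, hA.eigenvalues i := by
  conv_lhs => rw [hA.spectral_theorem]
  rw [Unitary.conjStarAlgAut_apply, Matrix.trace_mul_comm, ← mul_assoc, Unitary.coe_star_mul_self, one_mul]
  simp [Matrix.trace_diagonal]

lemma my_logdet_le {n : Type*} [Fintype n] [DecidableEq n]
    {A : Matrix n n ℝ} (hA : A.PosSemidef) (hd : 0 < A.det) :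
    Real.log A.det ≤ A.trace - Fintype.card n := by
  have hdet : A.det = ∏ i, hA.1.eigenvalues i := by
    simpa using hA.1.det_eq_prod_eigenvalues
  have hpos : ∀ i, 0 < hA.1.eigenvalues i := by
    intro i
    rcases lt_or_eq_of_le (hA.eigenvalues_nonneg i) with h | h
    · exact h
    · exfalso
      have : A.det = 0 := by
        rw [hdet]
        exact Finset.prod_eq_zero (Finset.mem_univ i) h.symm
      linarith
  rw [hdet, Real.log_prod (fun i _ => (hpos i).ne'),
    my_trace_eq_sum_eigenvalues hA.1]
  have : ∀ i ∈ Finset.univ, Real.log (hA.1.eigenvalues i) ≤ hA.1.eigenvalues i - 1 :=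
    fun i _ => Real.log_le_sub_one_of_pos (hpos i)
  calc ∑ i, Real.log (hA.1.eigenvalues i) ≤ ∑ i, (hA.1.eigenvalues i - 1) :=
        Finset.sum_le_sum this
    _ = (∑ i, hA.1.eigenvalues i) - Fintype.card n := by
        rw [Finset.sum_sub_distrib]; simp [Finset.card_univ]

open scoped MatrixOrder in
lemma my_grad_ineq {n : Type*} [Fintype n] [DecidableEq n]
    {Θ Θ' : Matrix n n ℝ} (hΘ : Θ.PosDef) (hΘ' : Θ'.PosDef) :
    Real.log Θ'.det - Real.log Θ.det ≤ (Θ⁻¹ * Θ').trace - Fintype.card n := by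
  have hinv : (Θ⁻¹).PosDef := hΘ.inv
  set C := CFC.sqrt Θ⁻¹ with hC
  have hCps : C.PosSemidef := (CFC.sqrt_nonneg Θ⁻¹).posSemidef
  have hCC : C * C = Θ⁻¹ := CFC.sqrt_mul_sqrt_self Θ⁻¹ hinv.posSemidef.nonneg
  have hCh : Cᴴ = C := hCps.1
  have hAps : (C * Θ' * C).PosSemidef := by
    have := hΘ'.posSemidef.conjTranspose_mul_mul_same C
    rwa [hCh] at this
  have hdetΘ : 0 < Θ.det := hΘ.det_pos
  have hdetΘ' : 0 < Θ'.det := hΘ'.det_pos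
  have hdetC : C.det * C.det = Θ.det⁻¹ := by
    rw [← Matrix.det_mul, hCC, Matrix.det_nonsing_inv]
    simp [Ring.inverse_eq_inv']
  have hdetA : (C * Θ' * C).det = Θ'.det / Θ.det := by
    rw [Matrix.det_mul, Matrix.det_mul]
    have h1 : C.det * C.det * Θ.det = 1 := by
      rw [hdetC]; field_simp
    field_simp
    linear_combination h1
  have hdA : 0 < (C * Θ' * C).det := by rw [hdetA]; positivity
  have htr : (C * Θ' * C).trace = (Θ⁻¹ * Θ').trace := by
    rw [Matrix.trace_mul_comm, ← mul_assoc, hCC]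
  have := my_logdet_le hAps hdA
  rw [hdetA, htr, Real.log_div hdetΘ'.ne' hdetΘ.ne'] at this
  exact this

/-- KKT sufficiency: a feasible `Θ` whose inverse satisfies the
optimality conditions minimizes `f` over `M^p`. -/
theorem stmt_9 {p : ℕ} (hp : 1 ≤ p)
    (S Λ : Matrix (Fin p) (Fin p) ℝ)
    (hSsymm : S.IsSymm) (hΛsymm : Λ.IsSymm)
    (hSdiag : ∀ i, 0 < S i i) (hΛnn : ∀ i j, 0 ≤ Λ i j) (hΛdiag : ∀ i, Λ i i = 0)
    (Θ : Matrix (Fin p) (Fin p) ℝ) (hmem : MSet Θ)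
    (hdiag : ∀ i, Θ⁻¹ i i = S i i)
    (hne : ∀ i j, i ≠ j → Θ i j ≠ 0 → Θ⁻¹ i j = S i j - Λ i j)
    (heq : ∀ i j, i ≠ j → Θ i j = 0 → S i j - Λ i j ≤ Θ⁻¹ i j) :
    ∀ Θ' : Matrix (Fin p) (Fin p) ℝ, MSet Θ' → objf S Λ Θ ≤ objf S Λ Θ' := by
  intro Θ' hmem'
  obtain ⟨hsym, hpd, hnp⟩ := hmem
  obtain ⟨hsym', hpd', hnp'⟩ := hmem'
  have hRsymm : ∀ i j : Fin p, Θ⁻¹ j i = Θ⁻¹ i j := by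
    intro i j
    have h1 : (Θ⁻¹)ᵀ = Θ⁻¹ := by
      rw [Matrix.transpose_nonsing_inv, hsym]
    exact congrFun (congrFun h1 i) j
  have hkey := my_grad_ineq hpd hpd'
  have hcard : (Fintype.card (Fin p) : ℝ) = (Θ⁻¹ * Θ).trace := by
    rw [Matrix.nonsing_inv_mul Θ hpd.det_pos.ne'.isUnit, Matrix.trace_one]
  rw [hcard] at hkey
  have expand : ∀ A B : Matrix (Fin p) (Fin p) ℝ,
      (A * B).trace = ∑ i, ∑ j, A i j * B j i := by
    intro A B
    simp [Matrix.trace, Matrix.mul_apply, Matrix.diag]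
  have hterm : ∀ i j : Fin p, 0 ≤ (Θ' i j - Θ i j) * (S j i - Θ⁻¹ j i) +
      ((if i = j then 0 else Λ i j * |Θ' i j|) -
       (if i = j then 0 else Λ i j * |Θ i j|)) := by
    intro i j
    by_cases hij : i = j
    · subst hij
      simp [hdiag i]
    · simp only [if_neg hij]
      rw [abs_of_nonpos (hnp' i j hij), abs_of_nonpos (hnp i j hij),
        hSsymm.apply i j, hRsymm i j]
      by_cases hz : Θ i j = 0
      · have hb := heq i j hij hz
        have h2 := hnp' i j hij
        rw [hz]
        nlinarith [mul_nonneg (neg_nonneg.mpr h2)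
          (by linarith : (0:ℝ) ≤ Θ⁻¹ i j - (S i j - Λ i j))]
      · have hb := hne i j hij hz
        have h0 : (Θ' i j - Θ i j) * (S i j - Θ⁻¹ i j) +
            (Λ i j * -Θ' i j - Λ i j * -Θ i j) = 0 := by rw [hb]; ring
        linarith
  have hsum : 0 ≤ ∑ i, ∑ j, ((Θ' i j - Θ i j) * (S j i - Θ⁻¹ j i) +
      ((if i = j then 0 else Λ i j * |Θ' i j|) -
       (if i = j then 0 else Λ i j * |Θ i j|))) :=
    Finset.sum_nonneg fun i _ => Finset.sum_nonneg fun j _ => hterm i j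
  have hrw : ∑ i, ∑ j, ((Θ' i j - Θ i j) * (S j i - Θ⁻¹ j i) +
      ((if i = j then 0 else Λ i j * |Θ' i j|) -
       (if i = j then 0 else Λ i j * |Θ i j|)))
      = ((Θ' * S).trace - (Θ * S).trace) - ((Θ⁻¹ * Θ').trace - (Θ⁻¹ * Θ).trace)
        + ((∑ i, ∑ j, if i = j then 0 else Λ i j * |Θ' i j|)
          - (∑ i, ∑ j, if i = j then 0 else Λ i j * |Θ i j|)) := by
    rw [Matrix.trace_mul_comm Θ⁻¹ Θ', Matrix.trace_mul_comm Θ⁻¹ Θ,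
      expand, expand, expand, expand]
    simp only [sub_mul, mul_sub, Finset.sum_add_distrib, Finset.sum_sub_distrib]
  rw [hrw] at hsum
  unfold objf
  linarith
end
end
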